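/- The periodic gl(1|1) Hamiltonian takes the almost-diagonal form exhibiting its rank-two Jordan structure: as operators on H = (ℂ²)^{⊗N}, −Σ_{j=1}^{N} e_j = 2 Σ_{n=1}^{L−1} sin(nπ/L)·(χ†_{nπ/L} χ_{nπ/L} − η†_{nπ/L} η_{nπ/L}) + 4 χ₀† η₀. -/

import Mathlib

/-!
In terms of the `gl(1|1)` fermions the hopping terms read `-e_j = (f_j† + f_{j+1}†)(f_j + f_{j+1})`:
the anticommutator `{f_j, f_j†} = (-1)^{j+1}` alternates along the chain, so on a ring of even
length the constants produced by normal ordering cancel. Parseval's identity at the `N`-th roots of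
unity then diagonalises `-Σ e_j` in the Fourier modes `φ_p` of the `f_j`, with dispersion
`|1 + e^{ip}|² = 2 + 2 cos p`. The shifted modes are `θ_{p-π/2} = φ_p`, `θ_{p+π/2} = φ_{p+π}`,
`θ†_{p+π/2} = φ_p†` and `θ†_{p-π/2} = φ_{p+π}†`, so `2 sin p (χ_p†χ_p - η_p†η_p)` is the
contribution of the pair of momenta `p, p + π`; the pair `0, π` gives `4 χ₀† η₀`, the mode `π`
carrying zero energy.
-/

open Complex Matrix

noncomputable section

namespace SpinChain

/-- The state space of the `N`-site spin chain, `(ℂ²)^{⊗N}` realised as functions on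
spin configurations. -/
abbrev V (N : ℕ) := (Fin N → Fin 2) → ℂ

/-- Operators on the spin chain, realised as matrices. -/
abbrev Op (N : ℕ) := Matrix (Fin N → Fin 2) (Fin N → Fin 2) ℂ

def sigmaX : Matrix (Fin 2) (Fin 2) ℂ := !![0, 1; 1, 0]
def sigmaY : Matrix (Fin 2) (Fin 2) ℂ := !![0, -I; I, 0]
def sigmaZ : Matrix (Fin 2) (Fin 2) ℂ := !![1, 0; 0, -1]
def sigmaPlus : Matrix (Fin 2) (Fin 2) ℂ := ((1 : ℂ)/2) • (sigmaX + I • sigmaY)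
def sigmaMinus : Matrix (Fin 2) (Fin 2) ℂ := ((1 : ℂ)/2) • (sigmaX - I • sigmaY)

variable (N : ℕ)

/-- The operator acting as the 2×2 matrix `a` on the `j`-th tensor factor and as the
identity on the others. -/
def site (a : Matrix (Fin 2) (Fin 2) ℂ) (j : Fin N) : Op N :=
  Matrix.of fun x y =>
    a (x j) (y j) * ∏ k ∈ Finset.univ.filter (fun k => k ≠ j), (if x k = y k then (1 : ℂ) else 0)

/-- Jordan–Wigner string `∏_{k<j} diag(z 0, z 1)_k`. -/
def string (z : Fin 2 → ℂ) (j : Fin N) : Op N :=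
  (((List.finRange N).filter (fun k => decide (k < j))).map
    (fun k => site N (Matrix.diagonal z) k)).prod

/-- Jordan–Wigner fermion `c_j := i^{1−j}·(∏_{k<j} diag(−i,i)_k)·σ⁻_j`; here the index
`j : Fin N` labels the physical site `j+1`. -/
def c (j : Fin N) : Op N :=
  (I ^ (-(j : ℤ))) • (string N ![-I, I] j * site N sigmaMinus j)

/-- Jordan–Wigner fermion `c_j† := i^{j−1}·(∏_{k<j} diag(i,−i)_k)·σ⁺_j`. -/
def cd (j : Fin N) : Op N :=
  (I ^ ((j : ℕ))) • (string N ![I, -I] j * site N sigmaPlus j)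

/-- The `gl(1|1)` fermion `f_j := i^j c_j` (physical index `j = j.val + 1`). -/
def f (j : Fin N) : Op N := (I ^ ((j : ℕ) + 1)) • c N j

/-- The `gl(1|1)` fermion `f_j† := i^j c_j†`. -/
def fd (j : Fin N) : Op N := (I ^ ((j : ℕ) + 1)) • cd N j

/-- Cyclic successor on site indices. -/
def fsucc {N : ℕ} (j : Fin N) : Fin N := ⟨(j.val + 1) % N, Nat.mod_lt _ j.pos⟩

/-- Periodic Temperley–Lieb generators
`e_j = (f_j+f_{j+1})(f_j†+f_{j+1}†)`, with `e_N = (f_N+f_1)(f_N†+f_1†)`. -/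
def e (j : Fin N) : Op N := (f N j + f N (fsucc j)) * (fd N j + fd N (fsucc j))

/-- `F_(m) := Σ_{j_1<⋯<j_m} f_{j_1}⋯f_{j_m}`. -/
def Fg (m : ℕ) : Op N :=
  ∑ s ∈ Finset.univ.powersetCard m, ((s.sort (· ≤ ·)).map (f N)).prod

/-- `F†_(m) := Σ_{j_1<⋯<j_m} f†_{j_1}⋯f†_{j_m}`. -/
def Fdg (m : ℕ) : Op N :=
  ∑ s ∈ Finset.univ.powersetCard m, ((s.sort (· ≤ ·)).map (fd N)).prod

/-- `S^z := (1/2) Σ_j σ^z_j`. -/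
def Sz : Op N := ((1 : ℂ)/2) • ∑ j : Fin N, site N sigmaZ j


/-- `θ_p := N^{−1/2} Σ_{k=1}^N e^{−ikp} c_k`. -/
def theta (p : ℝ) : Op N :=
  ((Real.sqrt N : ℂ))⁻¹ • ∑ k : Fin N, Complex.exp (-(I * ((k : ℕ) + 1) * (p : ℂ))) • c N k

/-- `θ_p† := N^{−1/2} Σ_{k=1}^N e^{ikp} c_k†`. -/
def thetad (p : ℝ) : Op N :=
  ((Real.sqrt N : ℂ))⁻¹ • ∑ k : Fin N, Complex.exp (I * ((k : ℕ) + 1) * (p : ℂ)) • cd N k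

/-- `χ_p := 2^{−1/2}(cot(p/2)^{1/2} θ_{p−π/2} + tan(p/2)^{1/2} θ_{p+π/2})`. -/
def chi (p : ℝ) : Op N :=
  ((Real.sqrt 2 : ℂ))⁻¹ • ((Real.sqrt (Real.cot (p/2)) : ℂ) • theta N (p - Real.pi/2)
    + (Real.sqrt (Real.tan (p/2)) : ℂ) • theta N (p + Real.pi/2))

/-- `χ_p† := 2^{−1/2}(tan(p/2)^{1/2} θ†_{p−π/2} + cot(p/2)^{1/2} θ†_{p+π/2})`. -/
def chid (p : ℝ) : Op N :=
  ((Real.sqrt 2 : ℂ))⁻¹ • ((Real.sqrt (Real.tan (p/2)) : ℂ) • thetad N (p - Real.pi/2)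
    + (Real.sqrt (Real.cot (p/2)) : ℂ) • thetad N (p + Real.pi/2))

/-- `η_p := 2^{−1/2}(cot(p/2)^{1/2} θ_{p−π/2} − tan(p/2)^{1/2} θ_{p+π/2})`. -/
def eta (p : ℝ) : Op N :=
  ((Real.sqrt 2 : ℂ))⁻¹ • ((Real.sqrt (Real.cot (p/2)) : ℂ) • theta N (p - Real.pi/2)
    - (Real.sqrt (Real.tan (p/2)) : ℂ) • theta N (p + Real.pi/2))

/-- `η_p† := 2^{−1/2}(tan(p/2)^{1/2} θ†_{p−π/2} − cot(p/2)^{1/2} θ†_{p+π/2})`. -/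
def etad (p : ℝ) : Op N :=
  ((Real.sqrt 2 : ℂ))⁻¹ • ((Real.sqrt (Real.tan (p/2)) : ℂ) • thetad N (p - Real.pi/2)
    - (Real.sqrt (Real.cot (p/2)) : ℂ) • thetad N (p + Real.pi/2))

open scoped Real

def tensorOp (A : Fin N → Matrix (Fin 2) (Fin 2) ℂ) : Op N :=
  Matrix.of fun x y => ∏ k, A k (x k) (y k)

lemma tensorOp_mul (A B : Fin N → Matrix (Fin 2) (Fin 2) ℂ) :
    tensorOp N A * tensorOp N B = tensorOp N fun k => A k * B k := by
  ext x y
  simp only [Matrix.mul_apply, tensorOp, Matrix.of_apply, ← Finset.prod_mul_distrib]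
  exact (Fintype.prod_sum fun k i => A k (x k) i * B k i (y k)).symm

lemma tensorOp_one : tensorOp N (fun _ => 1) = 1 := by
  ext x y
  simp only [tensorOp, Matrix.of_apply, Matrix.one_apply]
  split_ifs with h
  · simp [h]
  · obtain ⟨k, hk⟩ := Function.ne_iff.mp h
    exact Finset.prod_eq_zero (Finset.mem_univ k) (if_neg hk)

lemma tensorOp_eq_zero {A : Fin N → Matrix (Fin 2) (Fin 2) ℂ} {m : Fin N} (hm : A m = 0) :
    tensorOp N A = 0 := by
  ext x y
  exact Finset.prod_eq_zero (Finset.mem_univ m) (by simp [hm])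

lemma tensorOp_add_of_eqOn_compl {A B : Fin N → Matrix (Fin 2) (Fin 2) ℂ} {s : Fin N}
    (h : ∀ k, k ≠ s → A k = B k) :
    tensorOp N A + tensorOp N B = tensorOp N (Function.update A s (A s + B s)) := by
  ext x y
  have hB : ∏ k ∈ Finset.univ.erase s, B k (x k) (y k)
      = ∏ k ∈ Finset.univ.erase s, A k (x k) (y k) :=
    Finset.prod_congr rfl fun k hk => by rw [h k (Finset.ne_of_mem_erase hk)]
  have hU : ∏ k ∈ Finset.univ.erase s, Function.update A s (A s + B s) k (x k) (y k)
      = ∏ k ∈ Finset.univ.erase s, A k (x k) (y k) :=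
    Finset.prod_congr rfl fun k hk => by rw [Function.update_of_ne (Finset.ne_of_mem_erase hk)]
  simp only [Matrix.add_apply, tensorOp, Matrix.of_apply]
  have hs := Finset.mem_univ s
  rw [← Finset.mul_prod_erase _ _ hs, ← Finset.mul_prod_erase _ _ hs,
    ← Finset.mul_prod_erase _ _ hs, hB, hU, Function.update_self,
    Matrix.add_apply, add_mul]

lemma tensorOp_anticomm {A B : Fin N → Matrix (Fin 2) (Fin 2) ℂ} {s : Fin N}
    (h : ∀ k, k ≠ s → Commute (A k) (B k)) :
    tensorOp N A * tensorOp N B + tensorOp N B * tensorOp N A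
      = tensorOp N (Function.update (fun k => A k * B k) s (A s * B s + B s * A s)) := by
  rw [tensorOp_mul, tensorOp_mul]
  exact tensorOp_add_of_eqOn_compl N fun k hk => h k hk

lemma site_eq_tensorOp (a : Matrix (Fin 2) (Fin 2) ℂ) (j : Fin N) :
    site N a j = tensorOp N (Function.update 1 j a) := by
  ext x y
  simp only [site, tensorOp, Matrix.of_apply]
  rw [← Finset.mul_prod_erase _ _ (Finset.mem_univ j), Function.update_self]
  congr 1
  rw [show Finset.univ.filter (fun k => k ≠ j) = Finset.univ.erase j by ext k; simp [and_comm]]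
  exact Finset.prod_congr rfl fun k hk => by
    rw [Function.update_of_ne (Finset.ne_of_mem_erase hk), Pi.one_apply, Matrix.one_apply]

lemma list_prod_map_site (d : Matrix (Fin 2) (Fin 2) ℂ) :
    ∀ l : List (Fin N), l.Nodup →
      (l.map fun k => site N d k).prod = tensorOp N fun k => if k ∈ l then d else 1
  | [], _ => by simp [tensorOp_one]
  | a :: l, h => by
    rw [List.map_cons, List.prod_cons, list_prod_map_site d l (List.nodup_cons.mp h).2,
      site_eq_tensorOp, tensorOp_mul]
    refine congrArg (tensorOp N) (funext fun k => ?_)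
    by_cases hk : k = a
    · subst hk
      simp [(List.nodup_cons.mp h).1]
    · simp [hk]

lemma string_eq_tensorOp (z : Fin 2 → ℂ) (j : Fin N) :
    string N z j = tensorOp N fun k => if k < j then Matrix.diagonal z else 1 := by
  rw [string, list_prod_map_site N _ _ ((List.nodup_finRange N).filter _)]
  simp [List.mem_filter, List.mem_finRange]

def jwFactor (d a : Matrix (Fin 2) (Fin 2) ℂ) (j : Fin N) : Fin N → Matrix (Fin 2) (Fin 2) ℂ :=
  fun k => if k < j then d else if k = j then a else 1

lemma string_mul_site (z : Fin 2 → ℂ) (a : Matrix (Fin 2) (Fin 2) ℂ) (j : Fin N) :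
    string N z j * site N a j = tensorOp N (jwFactor N (Matrix.diagonal z) a j) := by
  rw [string_eq_tensorOp, site_eq_tensorOp, tensorOp_mul]
  refine congrArg (tensorOp N) (funext fun k => ?_)
  rcases lt_trichotomy k j with h | rfl | h
  · simp [jwFactor, h, h.ne]
  · simp [jwFactor]
  · simp [jwFactor, h.not_gt, h.ne']

lemma c_eq_tensorOp (j : Fin N) :
    c N j = I ^ (-(j : ℤ)) • tensorOp N (jwFactor N (Matrix.diagonal ![-I, I]) sigmaMinus j) := by
  rw [c, string_mul_site]

lemma cd_eq_tensorOp (j : Fin N) :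
    cd N j = I ^ (j : ℕ) • tensorOp N (jwFactor N (Matrix.diagonal ![I, -I]) sigmaPlus j) := by
  rw [cd, string_mul_site]

lemma jwFactor_commute_of_le (d a d' a' : Matrix (Fin 2) (Fin 2) ℂ) (hd : Commute d d')
    {j k : Fin N} (hjk : j ≤ k) (m : Fin N) (hm : m ≠ j) :
    Commute (jwFactor N d a j m) (jwFactor N d' a' k m) := by
  rcases lt_or_gt_of_ne hm with h | h
  · simp [jwFactor, h, h.trans_le hjk, hd]
  · simp [jwFactor, h.not_gt, h.ne']

lemma sigmaPlus_eq : sigmaPlus = !![0, 1; 0, 0] := by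
  ext a b
  fin_cases a <;> fin_cases b <;> simp [sigmaPlus, sigmaX, sigmaY]
  ring_nf

lemma sigmaMinus_eq : sigmaMinus = !![0, 0; 1, 0] := by
  ext a b
  fin_cases a <;> fin_cases b <;> simp [sigmaMinus, sigmaX, sigmaY]
  ring_nf

lemma sigmaMinus_anticomm_sigmaPlus : sigmaMinus * sigmaPlus + sigmaPlus * sigmaMinus = 1 := by
  simp [sigmaMinus_eq, sigmaPlus_eq, Matrix.one_fin_two]

lemma sigmaMinus_anticomm_diagonal :
    sigmaMinus * Matrix.diagonal ![I, -I] + Matrix.diagonal ![I, -I] * sigmaMinus = 0 := by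
  simp [sigmaMinus_eq, Matrix.diagonal_fin_two, ← Matrix.ext_iff, Fin.forall_fin_two]

lemma sigmaPlus_anticomm_diagonal :
    sigmaPlus * Matrix.diagonal ![-I, I] + Matrix.diagonal ![-I, I] * sigmaPlus = 0 := by
  simp [sigmaPlus_eq, Matrix.diagonal_fin_two, ← Matrix.ext_iff, Fin.forall_fin_two]

lemma diagonal_mul_diagonal_conj : Matrix.diagonal ![-I, I] * Matrix.diagonal ![I, -I] = 1 := by
  simp [Matrix.diagonal_fin_two, Matrix.one_fin_two]

lemma diagonal_commute_diagonal_conj :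
    Commute (Matrix.diagonal ![-I, I]) (Matrix.diagonal ![I, -I]) := by
  simp [Commute, SemiconjBy, Matrix.diagonal_mul_diagonal, mul_comm]

lemma c_mul_cd_add_cd_mul_c (j k : Fin N) :
    c N j * cd N k + cd N k * c N j = if j = k then 1 else 0 := by
  rw [c_eq_tensorOp, cd_eq_tensorOp, smul_mul_smul_comm, smul_mul_smul_comm, mul_comm (I ^ (k : ℕ)),
    ← smul_add]
  rcases lt_trichotomy j k with h | rfl | h
  · rw [tensorOp_anticomm N (jwFactor_commute_of_le N _ _ _ _ diagonal_commute_diagonal_conj h.le),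
      tensorOp_eq_zero N (m := j) (by simpa [jwFactor, h] using sigmaMinus_anticomm_diagonal),
      smul_zero, if_neg h.ne]
  · rw [tensorOp_anticomm N
        (jwFactor_commute_of_le N _ _ _ _ diagonal_commute_diagonal_conj le_rfl), if_pos rfl,
      ← zpow_natCast, ← zpow_add₀ I_ne_zero, neg_add_cancel, zpow_zero, one_smul, ← tensorOp_one N]
    congr 1
    ext1 m
    rcases lt_trichotomy m j with h | rfl | h
    · simpa [jwFactor, h, h.ne] using diagonal_mul_diagonal_conj
    · simp [jwFactor, sigmaMinus_anticomm_sigmaPlus]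
    · simp [jwFactor, h.not_gt, h.ne']
  · rw [add_comm, tensorOp_anticomm N fun m hm =>
        (jwFactor_commute_of_le N _ _ _ _ diagonal_commute_diagonal_conj.symm h.le m hm),
      tensorOp_eq_zero N (m := k) (by simpa [jwFactor, h] using sigmaPlus_anticomm_diagonal),
      smul_zero, if_neg h.ne']

lemma f_mul_fd_add_fd_mul_f (a b : Fin N) :
    f N a * fd N b + fd N b * f N a
      = (if a = b then (-1 : ℂ) ^ ((a : ℕ) + 1) else 0) • (1 : Op N) := by
  rw [f, fd, smul_mul_smul_comm, smul_mul_smul_comm, mul_comm (I ^ ((b : ℕ) + 1)), ← smul_add,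
    c_mul_cd_add_cd_mul_c]
  split_ifs with h
  · rw [h, ← mul_pow, I_mul_I]
  · rw [smul_zero, zero_smul]

lemma fsucc_ne_self (hN : Even N) (j : Fin N) : fsucc j ≠ j := by
  intro h
  have hv : ((j : ℕ) + 1) % N = j := congrArg Fin.val h
  obtain ⟨L, rfl⟩ := hN
  have := j.isLt
  rcases Nat.lt_or_ge ((j : ℕ) + 1) (L + L) with hlt | hge
  · rw [Nat.mod_eq_of_lt hlt] at hv; omega
  · rw [show (j : ℕ) + 1 = L + L by omega, Nat.mod_self] at hv; omega

lemma neg_one_pow_fsucc (hN : Even N) (j : Fin N) :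
    (-1 : ℂ) ^ ((fsucc j : ℕ) + 1) = -(-1) ^ ((j : ℕ) + 1) := by
  have hmod : ((j : ℕ) + 1) % N % 2 = ((j : ℕ) + 1) % 2 :=
    Nat.mod_mod_of_dvd _ (even_iff_two_dvd.mp hN)
  rw [show -(-1 : ℂ) ^ ((j : ℕ) + 1) = (-1) ^ ((j : ℕ) + 1 + 1) by ring,
    neg_one_pow_eq_pow_mod_two, neg_one_pow_eq_pow_mod_two (n := (j : ℕ) + 1 + 1),
    show (fsucc j : ℕ) = ((j : ℕ) + 1) % N from rfl]
  congr 1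
  omega

lemma neg_e_eq_fd_add_fd_mul_f_add_f (hN : Even N) (j : Fin N) :
    -e N j = (fd N j + fd N (fsucc j)) * (f N j + f N (fsucc j)) := by
  have hs := fsucc_ne_self N hN j
  refine neg_eq_of_add_eq_zero_right ?_
  calc e N j + (fd N j + fd N (fsucc j)) * (f N j + f N (fsucc j))
      = (f N j * fd N j + fd N j * f N j) + (f N j * fd N (fsucc j) + fd N (fsucc j) * f N j)
        + (f N (fsucc j) * fd N j + fd N j * f N (fsucc j))
        + (f N (fsucc j) * fd N (fsucc j) + fd N (fsucc j) * f N (fsucc j)) := by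
        rw [e]; noncomm_ring
    _ = 0 := by
        simp only [f_mul_fd_add_fd_mul_f, if_neg hs, if_neg hs.symm,
          neg_one_pow_fsucc N hN]
        simp

/-- Discrete Fourier transform at the phase `z = e^{ip}`, normalised and with sites labelled
`1, …, N` as in `θ_p`. -/
def dft {M : Type*} [AddCommMonoid M] [Module ℂ M] {N : ℕ} (A : Fin N → M) (z : ℂ) : M :=
  ((Real.sqrt N : ℂ))⁻¹ • ∑ k : Fin N, z ^ ((k : ℕ) + 1) • A k

section dft

variable {M : Type*} [AddCommMonoid M] [Module ℂ M] {N : ℕ}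

lemma dft_add (A B : Fin N → M) (z : ℂ) :
    dft (fun k => A k + B k) z = dft A z + dft B z := by
  simp only [dft, smul_add, Finset.sum_add_distrib]

lemma dft_mul (A : Fin N → M) (w z : ℂ) :
    dft A (w * z) = dft (fun k => w ^ ((k : ℕ) + 1) • A k) z := by
  simp only [dft, mul_pow, mul_comm (w ^ _), smul_smul]

lemma fsucc_eq_add_one [NeZero N] (j : Fin N) : fsucc j = j + 1 := by
  apply Fin.ext
  rw [Fin.add_def, Fin.val_one' N]
  exact (Nat.ModEq.add_left (j : ℕ) (Nat.mod_modEq 1 N)).symm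

lemma dft_comp_fsucc [NeZero N] (A : Fin N → M) {z : ℂ} (hz : z ^ N = 1) :
    dft (fun k => A (fsucc k)) z = z⁻¹ • dft A z := by
  have hz0 : z ≠ 0 := by rintro rfl; simp [NeZero.ne N] at hz
  rw [eq_inv_smul_iff₀ hz0, dft, dft, smul_comm, Finset.smul_sum]
  congr 1
  refine Fintype.sum_equiv (Equiv.addRight 1) _ _ fun k => ?_
  simp only [Equiv.coe_addRight, ← fsucc_eq_add_one, smul_smul, ← pow_succ']
  congr 1
  exact pow_eq_pow_of_modEq (Nat.ModEq.add_right 1 (Nat.mod_modEq _ N)).symm hz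

end dft

lemma sum_pow_mul_inv_pow_eq_ite {N : ℕ} {ζ : ℂ} (hζ : IsPrimitiveRoot ζ N) (j k : Fin N) :
    ∑ n ∈ Finset.range N, (ζ ^ n) ^ ((j : ℕ) + 1) * ((ζ ^ n)⁻¹) ^ ((k : ℕ) + 1)
      = if j = k then (N : ℂ) else 0 := by
  have hζ0 : ζ ≠ 0 := hζ.ne_zero j.pos.ne'
  set x := ζ ^ ((j : ℕ) + 1) * (ζ ^ ((k : ℕ) + 1))⁻¹
  have hx : ∀ n, (ζ ^ n) ^ ((j : ℕ) + 1) * ((ζ ^ n)⁻¹) ^ ((k : ℕ) + 1) = x ^ n := by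
    intro n
    rw [mul_pow, inv_pow, inv_pow, ← pow_mul, ← pow_mul, ← pow_mul, ← pow_mul, mul_comm n,
      mul_comm n]
  simp only [hx]
  split_ifs with hjk
  · simp [x, hjk, hζ0]
  · have hx1 : x ≠ 1 := fun h => hjk (Fin.ext (hζ.pow_inj j.isLt k.isLt (mul_right_cancel₀ hζ0
      (by rw [← pow_succ, ← pow_succ]; exact (mul_inv_eq_one₀ (pow_ne_zero _ hζ0)).mp h))))
    have hxN : x ^ N = 1 := by
      rw [mul_pow, inv_pow, ← pow_mul, ← pow_mul, mul_comm _ N, mul_comm _ N, pow_mul, pow_mul,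
        hζ.pow_eq_one]
      simp
    have := geom_sum_mul x N
    rw [hxN, sub_self] at this
    exact (mul_eq_zero.mp this).resolve_right (sub_ne_zero.mpr hx1)

lemma sum_dft_mul_dft_inv {R : Type*} [Ring R] [Algebra ℂ R] {N : ℕ} {ζ : ℂ}
    (hζ : IsPrimitiveRoot ζ N) (A B : Fin N → R) :
    ∑ n ∈ Finset.range N, dft A (ζ ^ n) * dft B (ζ ^ n)⁻¹ = ∑ j, A j * B j := by
  have hprod : ∀ z : ℂ, dft A z * dft B z⁻¹
      = (N : ℂ)⁻¹ • ∑ j : Fin N, ∑ k : Fin N,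
          (z ^ ((j : ℕ) + 1) * z⁻¹ ^ ((k : ℕ) + 1)) • (A j * B k) := by
    intro z
    rw [dft, dft, smul_mul_smul_comm, Finset.sum_mul_sum, ← mul_inv, ← ofReal_mul,
      Real.mul_self_sqrt (Nat.cast_nonneg N), ofReal_natCast]
    simp only [smul_mul_smul_comm]
  calc ∑ n ∈ Finset.range N, dft A (ζ ^ n) * dft B (ζ ^ n)⁻¹
      = (N : ℂ)⁻¹ • ∑ j : Fin N, ∑ k : Fin N, (∑ n ∈ Finset.range N,
          (ζ ^ n) ^ ((j : ℕ) + 1) * ((ζ ^ n)⁻¹) ^ ((k : ℕ) + 1)) • (A j * B k) := by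
        simp only [hprod, ← Finset.smul_sum, Finset.sum_smul]
        rw [Finset.sum_comm]
        exact congrArg _ (Finset.sum_congr rfl fun j _ => Finset.sum_comm)
    _ = ∑ j, A j * B j := by
        simp only [sum_pow_mul_inv_pow_eq_ite hζ, ite_smul, zero_smul, Finset.sum_ite_eq,
          Finset.mem_univ, if_true, Finset.smul_sum]
        exact Finset.sum_congr rfl fun j _ => by
          rw [smul_smul, inv_mul_cancel₀ (Nat.cast_ne_zero.mpr j.pos.ne'), one_smul]

lemma thetad_eq_dft (q : ℝ) : thetad N q = dft (cd N) (exp (q * I)) := by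
  simp only [thetad, dft, ← exp_nat_mul]
  congr 2 with k
  push_cast
  ring_nf

lemma theta_eq_dft (q : ℝ) : theta N q = dft (c N) (exp (q * I))⁻¹ := by
  simp only [theta, dft, ← exp_neg, ← exp_nat_mul]
  congr 2 with k
  push_cast
  ring_nf

lemma exp_add_pi_div_two_mul_I (p : ℝ) : exp (((p + π / 2 : ℝ) : ℂ) * I) = I * exp (p * I) := by
  push_cast
  rw [add_mul, exp_add, exp_pi_div_two_mul_I, mul_comm]

lemma exp_sub_pi_div_two_mul_I (p : ℝ) :
    exp (((p - π / 2 : ℝ) : ℂ) * I) = I * -exp (p * I) := by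
  have h := exp_add_pi_div_two_mul_I (p - π / 2)
  rw [sub_add_cancel] at h
  linear_combination I * h + exp (((p - π / 2 : ℝ) : ℂ) * I) * I_sq

lemma thetad_add_pi_div_two (p : ℝ) : thetad N (p + π / 2) = dft (fd N) (exp (p * I)) := by
  rw [thetad_eq_dft, exp_add_pi_div_two_mul_I, dft_mul]
  rfl

lemma thetad_sub_pi_div_two (p : ℝ) : thetad N (p - π / 2) = dft (fd N) (-exp (p * I)) := by
  rw [thetad_eq_dft, exp_sub_pi_div_two_mul_I, dft_mul]
  rfl

lemma theta_sub_pi_div_two (p : ℝ) : theta N (p - π / 2) = dft (f N) (exp (p * I))⁻¹ := by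
  rw [theta_eq_dft, exp_sub_pi_div_two_mul_I, mul_inv, inv_neg, inv_I, neg_mul_neg, dft_mul]
  rfl

lemma theta_add_pi_div_two (p : ℝ) : theta N (p + π / 2) = dft (f N) (-exp (p * I))⁻¹ := by
  rw [theta_eq_dft, exp_add_pi_div_two_mul_I, mul_inv, inv_I, neg_mul, ← mul_neg, ← inv_neg,
    dft_mul]
  rfl

lemma smul_add_mul_sub_smul_sub_mul {R : Type*} [Ring R] [Algebra ℂ R] (r t u : ℂ) (A B C D : R) :
    (r • (t • A + u • B)) * (r • (u • C + t • D)) - (r • (t • A - u • B)) * (r • (u • C - t • D))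
      = (2 * (r * r) * (t * t)) • (A * D) + (2 * (r * r) * (u * u)) • (B * C) := by
  simp only [smul_add, smul_sub, add_mul, mul_add, sub_mul, mul_sub, smul_mul_smul_comm, smul_smul]
  module

lemma chid_mul_chi_sub_etad_mul_eta (p : ℝ) (ht : 0 ≤ Real.tan (p / 2))
    (hc : 0 ≤ Real.cot (p / 2)) :
    chid N p * chi N p - etad N p * eta N p
      = (Real.tan (p / 2) : ℂ) • (thetad N (p - π / 2) * theta N (p + π / 2))
        + (Real.cot (p / 2) : ℂ) • (thetad N (p + π / 2) * theta N (p - π / 2)) := by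
  have hsq : ∀ x : ℝ, 0 ≤ x → (Real.sqrt x : ℂ) * Real.sqrt x = x := fun x hx => by
    rw [← ofReal_mul, Real.mul_self_sqrt hx]
  rw [chid, chi, etad, eta, smul_add_mul_sub_smul_sub_mul, ← mul_inv, hsq 2 zero_le_two, hsq _ ht,
    hsq _ hc]
  norm_num

lemma sin_mul_tan_half {p : ℝ} (hc : Real.cos (p / 2) ≠ 0) :
    Real.sin p * Real.tan (p / 2) = 1 - Real.cos p := by
  have hp : p = 2 * (p / 2) := by ring
  rw [hp, Real.sin_two_mul, Real.cos_two_mul, Real.tan_eq_sin_div_cos, ← hp]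
  field_simp
  linear_combination 2 * Real.sin_sq_add_cos_sq (p / 2)

lemma sin_mul_cot_half {p : ℝ} (hs : Real.sin (p / 2) ≠ 0) :
    Real.sin p * Real.cot (p / 2) = 1 + Real.cos p := by
  have hp : p = 2 * (p / 2) := by ring
  rw [hp, Real.sin_two_mul, Real.cos_two_mul, Real.cot_eq_cos_div_sin, ← hp]
  field_simp
  ring

/-- `φ†_p φ_p` for the Fourier modes `φ_p` of the `gl(1|1)` fermions `f_j`, at `z = e^{ip}`. -/
def modeNumber (z : ℂ) : Op N := dft (fd N) z * dft (f N) z⁻¹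

def modeHamiltonian (p : ℝ) : Op N :=
  ((2 + 2 * Real.cos p : ℝ) : ℂ) • modeNumber N (exp (p * I))

lemma modeHamiltonian_pi : modeHamiltonian N π = 0 := by
  simp [modeHamiltonian]

lemma exp_add_pi_mul_I (p : ℝ) : exp (((p + π : ℝ) : ℂ) * I) = -exp (p * I) := by
  push_cast
  rw [add_mul, exp_add, exp_pi_mul_I, mul_neg_one]

lemma two_sin_smul_chid_mul_chi_sub_etad_mul_eta {p : ℝ} (hp₀ : 0 < p) (hpπ : p < π) :
    (2 : ℂ) • ((Real.sin p : ℂ) • (chid N p * chi N p - etad N p * eta N p))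
      = modeHamiltonian N p + modeHamiltonian N (p + π) := by
  have hs : 0 < Real.sin (p / 2) := Real.sin_pos_of_pos_of_lt_pi (by linarith) (by linarith)
  have hc : 0 < Real.cos (p / 2) := Real.cos_pos_of_mem_Ioo ⟨by linarith, by linarith⟩
  have htan : Real.sin p * Real.tan (p / 2) = 1 - Real.cos p := sin_mul_tan_half hc.ne'
  have hcot : Real.sin p * Real.cot (p / 2) = 1 + Real.cos p := sin_mul_cot_half hs.ne'
  have htan₀ : 0 ≤ Real.tan (p / 2) :=
    Real.tan_nonneg_of_nonneg_of_le_pi_div_two (by linarith) (by linarith)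
  have hcot₀ : 0 ≤ Real.cot (p / 2) := by rw [Real.cot_eq_cos_div_sin]; positivity
  rw [chid_mul_chi_sub_etad_mul_eta N p htan₀ hcot₀,
    thetad_sub_pi_div_two, theta_add_pi_div_two, thetad_add_pi_div_two, theta_sub_pi_div_two,
    modeHamiltonian, modeHamiltonian, exp_add_pi_mul_I, Real.cos_add_pi, add_comm, modeNumber,
    modeNumber, smul_add, smul_add, smul_smul, smul_smul, smul_smul, smul_smul, mul_assoc,
    mul_assoc, ← ofReal_mul, ← ofReal_mul, htan, hcot]
  congr 2 <;> push_cast <;> ring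

lemma four_smul_thetad_mul_theta :
    (4 : ℂ) • (thetad N (π / 2) * theta N (3 * π / 2)) = modeHamiltonian N 0 := by
  have h := thetad_add_pi_div_two N 0
  have h' := theta_add_pi_div_two N π
  rw [zero_add] at h
  rw [show π + π / 2 = 3 * π / 2 by ring, exp_pi_mul_I, neg_neg] at h'
  rw [h, h', modeHamiltonian, modeNumber]
  norm_num

lemma two_add_two_cos (p : ℝ) :
    ((2 + 2 * Real.cos p : ℝ) : ℂ) = (1 + (exp (p * I))⁻¹) * (1 + exp (p * I)) := by
  push_cast
  rw [two_cos, neg_mul, exp_neg]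
  field_simp
  ring

lemma neg_sum_e_eq_sum_modeHamiltonian (hN : Even N) [NeZero N] :
    -(∑ j, e N j) = ∑ n ∈ Finset.range N, modeHamiltonian N (2 * π * n / N) := by
  have hζ := isPrimitiveRoot_exp N (NeZero.ne N)
  have hpow : ∀ n : ℕ, exp (2 * π * I / N) ^ n = exp (((2 * π * n / N : ℝ) : ℂ) * I) := by
    intro n
    rw [← exp_nat_mul]
    push_cast
    ring_nf
  rw [← Finset.sum_neg_distrib]
  simp only [neg_e_eq_fd_add_fd_mul_f_add_f N hN]
  rw [← sum_dft_mul_dft_inv hζ]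
  refine Finset.sum_congr rfl fun n _ => ?_
  have hz : (exp (2 * π * I / N) ^ n) ^ N = 1 := by rw [← pow_mul, pow_mul', hζ.pow_eq_one, one_pow]
  have hsmul : ∀ (c : ℂ) (X : Op N), X + c • X = (1 + c) • X := fun c X => by
    rw [add_smul, one_smul]
  rw [dft_add, dft_add, dft_comp_fsucc _ hz, dft_comp_fsucc _ (by rw [inv_pow, hz, inv_one]),
    inv_inv, hsmul, hsmul, smul_mul_smul_comm, hpow, modeHamiltonian, two_add_two_cos, modeNumber]

lemma sum_range_two_mul {M : Type*} [AddCommMonoid M] (F : ℕ → M) {L : ℕ} (hL : 0 < L)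
    (hFL : F L = 0) :
    ∑ n ∈ Finset.range (2 * L), F n = F 0 + ∑ n ∈ Finset.Ico 1 L, (F n + F (n + L)) := by
  rw [two_mul, Finset.sum_range_add, Finset.range_eq_Ico, Finset.sum_eq_sum_Ico_succ_bot hL,
    Finset.sum_eq_sum_Ico_succ_bot hL]
  simp only [zero_add, hFL, add_comm L, Finset.sum_add_distrib]
  abel

/-- **Almost-diagonal form of the periodic gl(1|1) Hamiltonian** exhibiting its
rank-two Jordan-block structure:
`−Σ_{j=1}^{N} e_j = 2 Σ_{n=1}^{L−1} sin(nπ/L)(χ†_p χ_p − η†_p η_p) + 4 χ₀† η₀`,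
with `p = nπ/L`, `χ₀† = θ†_{π/2}` and `η₀ = θ_{3π/2}` (`N = 2L`). -/
theorem gl11_hamiltonian_chi_eta_form (L : ℕ) (hL : 0 < L) :
    -(∑ j : Fin (2 * L), e (2 * L) j) =
      (2 : ℂ) • (∑ n ∈ Finset.Ico 1 L,
        ((Real.sin (n * Real.pi / L) : ℝ) : ℂ) •
          (chid (2 * L) (n * Real.pi / L) * chi (2 * L) (n * Real.pi / L)
            - etad (2 * L) (n * Real.pi / L) * eta (2 * L) (n * Real.pi / L)))
      + (4 : ℂ) • (thetad (2 * L) (Real.pi/2) * theta (2 * L) (3 * Real.pi/2)) := by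
  have : NeZero (2 * L) := ⟨by omega⟩
  have hLR : (0 : ℝ) < L := Nat.cast_pos.mpr hL
  have hmomentum : ∀ n : ℕ, 2 * π * n / ((2 * L : ℕ) : ℝ) = n * π / L := fun n => by
    push_cast
    field_simp
  have hband : ∀ n ∈ Finset.Ico 1 L,
      (2 : ℂ) • ((Real.sin (n * π / L) : ℂ) • (chid (2 * L) (n * π / L) * chi (2 * L) (n * π / L)
        - etad (2 * L) (n * π / L) * eta (2 * L) (n * π / L)))
      = modeHamiltonian (2 * L) (n * π / L) + modeHamiltonian (2 * L) ((n + L : ℕ) * π / L) := by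
    intro n hn
    obtain ⟨hn₁, hn₂⟩ := Finset.mem_Ico.mp hn
    have hp : n * π / L < π := by
      rw [div_lt_iff₀ hLR, mul_comm]
      exact mul_lt_mul_of_pos_left (by exact_mod_cast hn₂) Real.pi_pos
    rw [two_sin_smul_chid_mul_chi_sub_etad_mul_eta _ (by positivity) hp]
    congr 2
    push_cast
    field_simp
  rw [neg_sum_e_eq_sum_modeHamiltonian _ ⟨L, two_mul L⟩,
    Finset.sum_congr rfl fun n _ => by rw [hmomentum n],
    sum_range_two_mul _ hL (by simp [hLR.ne', modeHamiltonian_pi]), Finset.smul_sum,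
    Finset.sum_congr rfl hband, four_smul_thetad_mul_theta]
  simp [add_comm]

end SpinChain

end
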